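/- Let σ, τ ∈ AOP(n,m) be assemblies of ordered partitions. Then F(σ) = F(τ) if and only if σ ∼ τ, where σ ∼ τ means σ and τ have the same number ℓ of ordered partitions and for each a ∈ [ℓ], the a-th ordered partition of τ equals that of σ or its reversal. Consequently there is a bijection between B(n,m) and AOP(n,m)/∼. -/

import Mathlib

/-- An ordered partition: a list of (nonempty, pairwise disjoint) finite sets. -/
abbrev OP := List (Finset ℕ)

/-- An assembly of ordered partitions: a list of ordered partitions. -/
abbrev Assembly := List OP

/-- The union of the blocks of an ordered partition. -/
def Uop (op : OP) : Finset ℕ := op.foldr (· ∪ ·) ∅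

/-- `σ` is an assembly of ordered partitions of `[m]` with bound `n`. -/
def IsAOP (n m : ℕ) (σ : Assembly) : Prop :=
  (∀ op ∈ σ, op ≠ [] ∧ ∀ b ∈ op, b.Nonempty) ∧
  σ.flatten.Pairwise (fun s t => Disjoint s t) ∧
  σ.flatten.foldr (· ∪ ·) ∅ = Finset.Icc 1 m ∧
  σ.Pairwise (fun o₁ o₂ => (Uop o₁).min < (Uop o₂).min) ∧
  (σ.map List.length).sum + (σ.length - 1) ≤ n

/-- `x` and `y` lie in a common block of some ordered partition of `σ`. -/
def sameBlock (σ : Assembly) (x y : ℕ) : Prop :=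
  ∃ op ∈ σ, ∃ b ∈ op, x ∈ b ∧ y ∈ b

/-- `x` and `y` lie in consecutive blocks of some ordered partition of `σ`. -/
def adjBlock (σ : Assembly) (x y : ℕ) : Prop :=
  ∃ op ∈ σ, ∃ t : ℕ, t + 1 < op.length ∧
    ((x ∈ op[t]! ∧ y ∈ op[t + 1]!) ∨ (y ∈ op[t]! ∧ x ∈ op[t + 1]!))

/-- `x` and `y` are neighbors in `σ`. -/
def Neighbor (σ : Assembly) (x y : ℕ) : Prop := sameBlock σ x y ∨ adjBlock σ x y

open Classical in
/-- The Bott matrix `F(σ)` associated to an assembly `σ` of ordered partitions of `[m]`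
(the element of `[m]` corresponding to the index `j : Fin m` is `j + 1`). -/
noncomputable def FMat (m : ℕ) (σ : Assembly) : Matrix (Fin m) (Fin m) ℤ :=
  fun j k =>
    if j = k then -1
    else if k < j then
      (if sameBlock σ ((j : ℕ) + 1) ((k : ℕ) + 1) then -2
       else if adjBlock σ ((j : ℕ) + 1) ((k : ℕ) + 1) then 1 else 0)
    else 0

/-- The set of indices (1-based) on which the sequence `i` takes the value `v`. -/
def fiberSet (m : ℕ) (i : Fin m → ℤ) (v : ℤ) : Finset ℕ :=
  (Finset.univ.filter (fun k => i k = v)).image (fun k : Fin m => (k : ℕ) + 1)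

/-- Group a sorted list of integers into maximal runs of consecutive integers. -/
def groupRuns : List ℤ → List (List ℤ)
  | [] => []
  | a :: rest =>
    match groupRuns rest with
    | [] => [[a]]
    | [] :: gs => [a] :: [] :: gs
    | (b :: g) :: gs =>
        if a + 1 = b then (a :: b :: g) :: gs else [a] :: (b :: g) :: gs

/-- The map `α` sending a sequence to its assembly of ordered partitions. -/
def alpha (m : ℕ) (i : Fin m → ℤ) : Assembly :=
  (groupRuns ((Finset.image i Finset.univ).sort (· ≤ ·))).map
    (fun run => run.map (fiberSet m i))

/-- The equivalence `∼` on assemblies: same length, and each constituent ordered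
partition agrees up to reversal. -/
def SimRel (σ τ : Assembly) : Prop :=
  List.Forall₂ (fun s t => t = s ∨ t = s.reverse) σ τ

/-- The Bott matrix of BS type associated to a sequence `i`. -/
def bottMatrix (m : ℕ) (i : Fin m → ℤ) : Matrix (Fin m) (Fin m) ℤ :=
  fun j k =>
    if j = k then -1
    else if k < j then
      (if i j = i k then -2 else if |i j - i k| = 1 then 1 else 0)
    else 0

/-- The set `B(n,m)` of Bott matrices of BS type arising from sequences in `[n]^m`. -/
def BSet (n m : ℕ) : Set (Matrix (Fin m) (Fin m) ℤ) :=
  {B | ∃ i : Fin m → ℤ, (∀ t, i t ∈ Finset.Icc (1 : ℤ) n) ∧ B = bottMatrix m i}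

/-!
Off the diagonal, `F(σ)` records for each pair of elements whether they lie in one block (`-2`),
in adjacent blocks of one ordered partition (`1`), or neither. A block is never adjacent to
itself, so `F(σ) = F(τ)` says exactly that these two relations agree; reversing an ordered
partition changes neither. The relations determine the blocks and, for each block, its
neighbours. A duplicate-free list is determined up to reversal by its adjacency relation and any
one of its entries, and the least element of `[m]` lies in the first ordered partition of both
assemblies; peeling these off one at a time gives `σ ∼ τ`.

For the bijection with `B(n,m)`: inserting an empty block in front of each ordered partition
and sending `x` to the position of its block gives a sequence with Bott matrix `F(σ)`, the size
bound in `AOP(n,m)` keeping its values in `[n]`. Conversely the fibres of a sequence, grouped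
into runs of consecutive values and sorted by least element, form an assembly whose matrix is
the Bott matrix of the sequence.
-/

namespace List

variable {α β : Type*} {L L' : List α} {a b c : α} {f : α → β} {B C : β}

def Adjacent (L : List α) (a b : α) : Prop := [a, b] <:+: L ∨ [b, a] <:+: L

theorem Adjacent.symm (h : L.Adjacent a b) : L.Adjacent b a := Or.symm h

theorem Adjacent.mono (h : L.Adjacent a b) (hL : L <:+: L') : L'.Adjacent a b :=
  h.imp (·.trans hL) (·.trans hL)

theorem Adjacent.mem_left (h : L.Adjacent a b) : a ∈ L := by
  rcases h with h | h <;> exact h.subset (by simp)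

theorem Adjacent.mem_right (h : L.Adjacent a b) : b ∈ L := h.symm.mem_left

theorem Adjacent.ne (hL : L.Nodup) (h : L.Adjacent a b) : a ≠ b := by
  rintro rfl
  rcases h with h | h <;> exact absurd (hL.sublist h.sublist) (by simp)

@[simp]
theorem adjacent_reverse : L.reverse.Adjacent a b ↔ L.Adjacent a b := by
  have key : ∀ x y : α, [x, y] <:+: L.reverse ↔ [y, x] <:+: L := fun x y => by
    rw [← reverse_infix, reverse_reverse]
    simp
  rw [Adjacent, Adjacent, key, key, or_comm]

theorem adjacent_cons :
    (c :: L).Adjacent a b ↔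
      (a = c ∧ L.head? = some b) ∨ (b = c ∧ L.head? = some a) ∨ L.Adjacent a b := by
  simp only [Adjacent, infix_cons_iff, cons_prefix_cons, singleton_prefix_iff_head?_eq_some]
  tauto

theorem adjacent_cons_self (hc : c ∉ L) : (c :: L).Adjacent c b ↔ L.head? = some b := by
  rw [adjacent_cons]
  refine ⟨?_, fun h => Or.inl ⟨rfl, h⟩⟩
  rintro (⟨-, h⟩ | ⟨rfl, h⟩ | h)
  · exact h
  · exact absurd (mem_of_head? h) hc
  · exact absurd h.mem_left hc

theorem adjacent_iff_getElem :
    L.Adjacent a b ↔ ∃ (t : ℕ) (h : t + 1 < L.length),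
      (L[t] = a ∧ L[t + 1] = b) ∨ (L[t] = b ∧ L[t + 1] = a) := by
  have pair : ∀ a b, [a, b] <:+: L ↔
      ∃ (t : ℕ) (h : t + 1 < L.length), L[t] = a ∧ L[t + 1] = b := by
    intro a b
    rw [infix_iff_getElem?]
    constructor
    · rintro ⟨t, ht, h⟩
      have h0 := h 0 (by simp)
      have h1 := h 1 (by simp)
      simp only [length_cons, length_nil] at ht
      rw [getElem?_eq_getElem (by omega)] at h0 h1
      exact ⟨t, by omega, by simpa [Nat.add_comm] using h0, by simpa [Nat.add_comm] using h1⟩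
    · rintro ⟨t, ht, rfl, rfl⟩
      refine ⟨t, by simp; omega, fun i hi => ?_⟩
      match i, hi with
      | 0, _ => simp
      | 1, _ => simp [Nat.add_comm]
  simp only [Adjacent, pair]
  constructor
  · rintro (⟨t, ht, h⟩ | ⟨t, ht, h⟩)
    exacts [⟨t, ht, Or.inl h⟩, ⟨t, ht, Or.inr h⟩]
  · rintro ⟨t, ht, h | h⟩
    exacts [Or.inl ⟨t, ht, h⟩, Or.inr ⟨t, ht, h⟩]

theorem adjacent_map :
    (L.map f).Adjacent B C ↔ ∃ a b, L.Adjacent a b ∧ f a = B ∧ f b = C := by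
  have pair : ∀ B C : β,
      [B, C] <:+: L.map f ↔ ∃ a b, [a, b] <:+: L ∧ f a = B ∧ f b = C := by
    intro B C
    rw [infix_map_iff]
    constructor
    · rintro ⟨l, hl, hBC⟩
      obtain ⟨a, b, rfl⟩ : ∃ a b, l = [a, b] := by
        rcases l with _ | ⟨a, _ | ⟨b, _ | _⟩⟩ <;> simp_all
      simp only [map_cons, map_nil, cons.injEq, and_true] at hBC
      exact ⟨a, b, hl, hBC.1.symm, hBC.2.symm⟩
    · rintro ⟨a, b, hab, rfl, rfl⟩
      exact ⟨[a, b], hab, rfl⟩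
  simp only [Adjacent, pair]
  constructor
  · rintro (⟨a, b, h, rfl, rfl⟩ | ⟨b, a, h, rfl, rfl⟩)
    exacts [⟨a, b, Or.inl h, rfl, rfl⟩, ⟨a, b, Or.inr h, rfl, rfl⟩]
  · rintro ⟨a, b, h | h, rfl, rfl⟩
    exacts [Or.inl ⟨a, b, h, rfl, rfl⟩, Or.inr ⟨b, a, h, rfl, rfl⟩]

theorem Adjacent.of_append {l₁ l₂ : List α} (h : (l₁ ++ l₂).Adjacent a b) :
    l₁.Adjacent a b ∨ l₂.Adjacent a b ∨ l₂.head? = some a ∨ l₂.head? = some b := by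
  induction l₁ with
  | nil => exact Or.inr (Or.inl h)
  | cons d l₁ ih =>
    have hmono : l₁.Adjacent a b → (d :: l₁).Adjacent a b :=
      (·.mono (suffix_cons d l₁).isInfix)
    rcases adjacent_cons.mp h with ⟨rfl, h⟩ | ⟨rfl, h⟩ | h
    · rcases l₁ with _ | ⟨e, l₁⟩
      · simp_all
      · simp_all [adjacent_cons]
    · rcases l₁ with _ | ⟨e, l₁⟩
      · simp_all
      · simp_all [adjacent_cons]
    · rcases ih h with h | h <;> tauto

theorem forall_mem_of_adjacent_closed {p : α → Prop}
    (hp : ∀ a b, p a → L.Adjacent a b → p b) (ha : a ∈ L) (hpa : p a) :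
    ∀ b ∈ L, p b := by
  induction L generalizing a with
  | nil => simp at ha
  | cons c L ih =>
    have htail : ∀ a b, p a → L.Adjacent a b → p b :=
      fun a b ha hab => hp a b ha (hab.mono (suffix_cons c L).isInfix)
    suffices hc : p c by
      intro b hb
      rcases mem_cons.mp hb with rfl | hb
      · exact hc
      obtain ⟨e, L', rfl⟩ := exists_cons_of_ne_nil (ne_nil_of_mem hb)
      exact ih htail mem_cons_self (hp c e hc (adjacent_cons.mpr (Or.inl ⟨rfl, rfl⟩))) b hb
    rcases mem_cons.mp ha with rfl | ha
    · exact hpa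
    obtain ⟨e, L', rfl⟩ := exists_cons_of_ne_nil (ne_nil_of_mem ha)
    exact hp e c (ih htail ha hpa e mem_cons_self)
      (adjacent_cons.mpr (Or.inr (Or.inl ⟨rfl, rfl⟩)))

theorem head?_eq_or_getLast?_eq_of_adjacent_unique (hL : L.Nodup) (hc : c ∈ L)
    (h : ∀ b b', L.Adjacent c b → L.Adjacent c b' → b = b') :
    L.head? = some c ∨ L.getLast? = some c := by
  obtain ⟨l₁, l₂, rfl⟩ := append_of_mem hc
  rcases eq_nil_or_concat l₁ with rfl | ⟨l₁, p, rfl⟩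
  · simp
  rcases l₂ with _ | ⟨q, l₂⟩
  · simp
  have hpq : p = q :=
    h p q (Or.inr ⟨l₁, q :: l₂, by simp⟩) (Or.inl ⟨l₁ ++ [p], l₂, by simp⟩)
  simp [nodup_append, hpq] at hL

def SameAdjacency (L L' : List α) : Prop :=
  ∀ a ∈ L, a ∈ L' → ∀ b, L.Adjacent a b ↔ L'.Adjacent a b

theorem SameAdjacency.reverse_right (h : SameAdjacency L L') : SameAdjacency L L'.reverse := by
  intro a ha ha' b
  rw [adjacent_reverse]
  exact h a ha (mem_reverse.mp ha') b

theorem SameAdjacency.eq_of_head?_eq (hL : L.Nodup) (hL' : L'.Nodup) (h : SameAdjacency L L')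
    (hhead : L.head? = L'.head?) : L = L' := by
  induction L generalizing L' with
  | nil => exact (head?_eq_none_iff.mp hhead.symm).symm
  | cons c R ih =>
    obtain ⟨R', rfl⟩ : ∃ R', L' = c :: R' := by
      rcases L' with _ | ⟨c', R'⟩ <;> simp_all
    have hcR := (nodup_cons.mp hL).1
    have hcR' := (nodup_cons.mp hL').1
    have hheads : R.head? = R'.head? := Option.ext fun b => by
      rw [← adjacent_cons_self hcR, ← adjacent_cons_self hcR']
      exact h c mem_cons_self mem_cons_self b
    have tail_adj : ∀ {S : List α}, c ∉ S → ∀ {d e}, d ∈ S →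
        (S.Adjacent d e ↔ (c :: S).Adjacent d e ∧ e ≠ c) := by
      intro S hcS d e hd
      rw [adjacent_cons]
      refine ⟨fun hde => ⟨Or.inr (Or.inr hde), fun hec => hcS (hec ▸ hde.mem_right)⟩, ?_⟩
      rintro ⟨⟨rfl, -⟩ | ⟨rfl, -⟩ | hde, hec⟩
      exacts [absurd hd hcS, absurd rfl hec, hde]
    have hsame : SameAdjacency R R' := fun d hd hd' e => by
      rw [tail_adj hcR hd, tail_adj hcR' hd', h d (mem_cons_of_mem c hd) (mem_cons_of_mem c hd')]
    rw [ih (nodup_cons.mp hL).2 (nodup_cons.mp hL').2 hsame hheads]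

theorem SameAdjacency.eq_or_eq_reverse (hL : L.Nodup) (hL' : L'.Nodup) (h : SameAdjacency L L')
    (ha : a ∈ L) (ha' : a ∈ L') : L' = L ∨ L' = L.reverse := by
  have hsub : ∀ b ∈ L, b ∈ L' :=
    forall_mem_of_adjacent_closed (fun b d hb hbd => ((h b hbd.mem_left hb d).mp hbd).mem_right)
      ha ha'
  obtain ⟨c, R, rfl⟩ := exists_cons_of_ne_nil (ne_nil_of_mem ha)
  have hc' : c ∈ L' := hsub c mem_cons_self
  have hunique : ∀ b b', L'.Adjacent c b → L'.Adjacent c b' → b = b' := by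
    intro b b' hb hb'
    rw [← h c mem_cons_self hc', adjacent_cons_self (nodup_cons.mp hL).1] at hb hb'
    exact Option.some_injective _ (hb.symm.trans hb')
  rcases head?_eq_or_getLast?_eq_of_adjacent_unique hL' hc' hunique with hhead | hlast
  · exact Or.inl (h.eq_of_head?_eq hL hL' (by simp [hhead])).symm
  · refine Or.inr ?_
    rw [h.reverse_right.eq_of_head?_eq hL (nodup_reverse.mpr hL') (by simp [hlast]),
      reverse_reverse]

end List

section Blocks

variable {L : List (Finset ℕ)} {σ τ rest : Assembly} {op op' : OP} {B C : Finset ℕ}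
  {x y : ℕ}

theorem mem_foldr_union : x ∈ L.foldr (· ∪ ·) ∅ ↔ ∃ b ∈ L, x ∈ b := by
  induction L with
  | nil => simp
  | cons b L ih => simp [ih]

theorem mem_Uop : x ∈ Uop op ↔ ∃ b ∈ op, x ∈ b := mem_foldr_union

theorem Uop_reverse : Uop op.reverse = Uop op := by
  ext x
  simp [mem_Uop]

def supp (σ : Assembly) : Finset ℕ := σ.flatten.foldr (· ∪ ·) ∅

theorem mem_supp : x ∈ supp σ ↔ ∃ b ∈ σ.flatten, x ∈ b := mem_foldr_union

theorem supp_cons : supp (op :: rest) = Uop op ∪ supp rest := by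
  ext x
  simp [mem_supp, mem_Uop, or_and_right, exists_or]

def sameBlockIn (L : List (Finset ℕ)) (x y : ℕ) : Prop := ∃ b ∈ L, x ∈ b ∧ y ∈ b

def adjBlockIn (L : List (Finset ℕ)) (x y : ℕ) : Prop :=
  ∃ B C, L.Adjacent B C ∧ x ∈ B ∧ y ∈ C

theorem adjBlockIn.symm (h : adjBlockIn L x y) : adjBlockIn L y x := by
  obtain ⟨B, C, hBC, hx, hy⟩ := h
  exact ⟨C, B, hBC.symm, hy, hx⟩

@[simp]
theorem sameBlockIn_reverse : sameBlockIn L.reverse x y ↔ sameBlockIn L x y := by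
  simp [sameBlockIn]

@[simp]
theorem adjBlockIn_reverse : adjBlockIn L.reverse x y ↔ adjBlockIn L x y := by
  simp [adjBlockIn]

theorem sameBlock_iff : sameBlock σ x y ↔ sameBlockIn σ.flatten x y := by
  simp only [sameBlock, sameBlockIn, List.mem_flatten]
  aesop

theorem adjBlock_iff : adjBlock σ x y ↔ ∃ op ∈ σ, adjBlockIn op x y := by
  unfold adjBlock
  refine exists_congr fun op => and_congr_right fun _ => ?_
  simp only [adjBlockIn, List.adjacent_iff_getElem]
  constructor
  · rintro ⟨t, ht, h⟩
    rw [getElem!_pos op t (by omega), getElem!_pos op (t + 1) ht] at h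
    rcases h with ⟨hx, hy⟩ | ⟨hy, hx⟩
    exacts [⟨_, _, ⟨t, ht, Or.inl ⟨rfl, rfl⟩⟩, hx, hy⟩,
      ⟨_, _, ⟨t, ht, Or.inr ⟨rfl, rfl⟩⟩, hx, hy⟩]
  · rintro ⟨B, C, ⟨t, ht, hBC⟩, hx, hy⟩
    refine ⟨t, ht, ?_⟩
    rw [getElem!_pos op t (by omega), getElem!_pos op (t + 1) ht]
    rcases hBC with ⟨rfl, rfl⟩ | ⟨rfl, rfl⟩
    exacts [Or.inl ⟨hx, hy⟩, Or.inr ⟨hy, hx⟩]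

theorem sameBlock.symm (h : sameBlock σ x y) : sameBlock σ y x := by
  obtain ⟨op, hop, b, hb, hx, hy⟩ := h
  exact ⟨op, hop, b, hb, hy, hx⟩

theorem adjBlock.symm (h : adjBlock σ x y) : adjBlock σ y x := by
  obtain ⟨op, hop, h⟩ := adjBlock_iff.mp h
  exact adjBlock_iff.mpr ⟨op, hop, h.symm⟩

theorem sameBlock_self_iff : sameBlock σ x x ↔ x ∈ supp σ := by
  simp [sameBlock_iff, sameBlockIn, mem_supp]

theorem sameBlock.mem_supp (h : sameBlock σ x y) : x ∈ supp σ := by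
  obtain ⟨b, hb, hx, -⟩ := sameBlock_iff.mp h
  exact _root_.mem_supp.mpr ⟨b, hb, hx⟩

theorem adjBlock.mem_supp (h : adjBlock σ x y) : x ∈ supp σ := by
  obtain ⟨op, hop, B, C, hBC, hx, -⟩ := adjBlock_iff.mp h
  exact _root_.mem_supp.mpr ⟨B, List.mem_flatten.mpr ⟨op, hop, hBC.mem_left⟩, hx⟩

theorem supp_eq_of_sameBlock_eq (h : sameBlock σ = sameBlock τ) : supp σ = supp τ := by
  ext x
  rw [← sameBlock_self_iff, ← sameBlock_self_iff, h]

theorem sameBlock_cons :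
    sameBlock (op :: rest) x y ↔ sameBlockIn op x y ∨ sameBlock rest x y := by
  simp [sameBlock, sameBlockIn]

theorem adjBlock_cons : adjBlock (op :: rest) x y ↔ adjBlockIn op x y ∨ adjBlock rest x y := by
  simp [adjBlock_iff]

theorem sameBlockIn.mem_Uop (h : sameBlockIn op x y) : x ∈ Uop op := by
  obtain ⟨b, hb, hx, -⟩ := h
  exact _root_.mem_Uop.mpr ⟨b, hb, hx⟩

theorem adjBlockIn.mem_Uop (h : adjBlockIn op x y) : x ∈ Uop op := by
  obtain ⟨B, C, hBC, hx, -⟩ := h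
  exact _root_.mem_Uop.mpr ⟨B, hBC.mem_left, hx⟩

def IsOPAssembly (σ : Assembly) : Prop :=
  (∀ op ∈ σ, op ≠ [] ∧ ∀ b ∈ op, b.Nonempty) ∧ σ.flatten.Pairwise Disjoint

section IsAOP

variable {n m : ℕ}

theorem IsAOP.isOPAssembly (h : IsAOP n m σ) : IsOPAssembly σ := ⟨h.1, h.2.1⟩

theorem IsAOP.supp_eq (h : IsAOP n m σ) : supp σ = Finset.Icc 1 m := h.2.2.1

theorem IsAOP.pairwise_min_lt (h : IsAOP n m σ) :
    σ.Pairwise (fun o₁ o₂ => (Uop o₁).min < (Uop o₂).min) := h.2.2.2.1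

theorem IsAOP.length_le (h : IsAOP n m σ) : (σ.map List.length).sum + (σ.length - 1) ≤ n :=
  h.2.2.2.2

end IsAOP

namespace IsOPAssembly

theorem tail (h : IsOPAssembly (op :: rest)) : IsOPAssembly rest := by
  refine ⟨fun o ho => h.1 o (List.mem_cons_of_mem _ ho), ?_⟩
  have := h.2
  rw [List.flatten_cons, List.pairwise_append] at this
  exact this.2.1

theorem nonempty (h : IsOPAssembly σ) (hb : B ∈ σ.flatten) : B.Nonempty := by
  obtain ⟨op, hop, hB⟩ := List.mem_flatten.mp hb
  exact (h.1 op hop).2 B hB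

theorem Uop_nonempty (h : IsOPAssembly σ) (hop : op ∈ σ) : (Uop op).Nonempty := by
  obtain ⟨B, hB⟩ := List.exists_mem_of_ne_nil _ (h.1 op hop).1
  obtain ⟨x, hx⟩ := (h.1 op hop).2 B hB
  exact ⟨x, mem_Uop.mpr ⟨B, hB, hx⟩⟩

theorem supp_nonempty (h : IsOPAssembly (op :: rest)) : (supp (op :: rest)).Nonempty := by
  rw [supp_cons]
  exact (h.Uop_nonempty List.mem_cons_self).mono Finset.subset_union_left

theorem nodup_flatten (h : IsOPAssembly σ) : σ.flatten.Nodup :=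
  h.2.imp_of_mem fun hB _ hBC hBeq => by
    obtain ⟨x, hx⟩ := h.nonempty hB
    exact Finset.disjoint_left.mp hBC hx (hBeq ▸ hx)

theorem nodup (h : IsOPAssembly σ) (hop : op ∈ σ) : op.Nodup :=
  (List.nodup_flatten.mp h.nodup_flatten).1 op hop

theorem eq_of_mem_of_mem (h : IsOPAssembly σ) (hB : B ∈ σ.flatten) (hC : C ∈ σ.flatten)
    (hxB : x ∈ B) (hxC : x ∈ C) : B = C := by
  by_contra hne
  exact Finset.disjoint_left.mp (h.2.forall hB hC hne) hxB hxC

theorem part_eq_of_mem (h : IsOPAssembly σ) (hop : op ∈ σ) (hop' : op' ∈ σ) (hB : B ∈ op)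
    (hB' : B ∈ op') : op = op' := by
  by_contra hne
  have : Std.Symm (α := OP) List.Disjoint := ⟨fun _ _ h => h.symm⟩
  have hdisj := (List.nodup_flatten.mp h.nodup_flatten).2.forall hop hop' hne
  exact hdisj hB hB'

theorem mem_iff_sameBlock (h : IsOPAssembly σ) (hB : B ∈ σ.flatten) (hx : x ∈ B) :
    y ∈ B ↔ sameBlock σ x y := by
  rw [sameBlock_iff]
  refine ⟨fun hy => ⟨B, hB, hx, hy⟩, ?_⟩
  rintro ⟨C, hC, hxC, hyC⟩
  rwa [h.eq_of_mem_of_mem hB hC hx hxC]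

theorem not_mem_supp_tail (h : IsOPAssembly (op :: rest)) (hx : x ∈ Uop op) :
    x ∉ supp rest := by
  obtain ⟨B, hB, hxB⟩ := mem_Uop.mp hx
  rw [mem_supp]
  rintro ⟨C, hC, hxC⟩
  have hpair := h.2
  rw [List.flatten_cons, List.pairwise_append] at hpair
  exact Finset.disjoint_left.mp (hpair.2.2 B hB C hC) hxB hxC

theorem sameBlock_tail_iff (h : IsOPAssembly (op :: rest)) :
    sameBlock rest x y ↔ sameBlock (op :: rest) x y ∧ x ∉ Uop op := by
  rw [sameBlock_cons]
  refine ⟨fun hr => ⟨Or.inr hr, fun hx => h.not_mem_supp_tail hx hr.mem_supp⟩, ?_⟩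
  rintro ⟨hin | hr, hx⟩
  exacts [absurd hin.mem_Uop hx, hr]

theorem adjBlock_tail_iff (h : IsOPAssembly (op :: rest)) :
    adjBlock rest x y ↔ adjBlock (op :: rest) x y ∧ x ∉ Uop op := by
  rw [adjBlock_cons]
  refine ⟨fun hr => ⟨Or.inr hr, fun hx => h.not_mem_supp_tail hx hr.mem_supp⟩, ?_⟩
  rintro ⟨hin | hr, hx⟩
  exacts [absurd hin.mem_Uop hx, hr]

theorem not_adjBlock_of_sameBlock (h : IsOPAssembly σ) (hs : sameBlock σ x y) :
    ¬ adjBlock σ x y := by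
  obtain ⟨B, hB, hxB, hyB⟩ := sameBlock_iff.mp hs
  rintro ha
  obtain ⟨op, hop, C, D, hCD, hxC, hyD⟩ := adjBlock_iff.mp ha
  have hC : C ∈ σ.flatten := List.mem_flatten.mpr ⟨op, hop, hCD.mem_left⟩
  have hD : D ∈ σ.flatten := List.mem_flatten.mpr ⟨op, hop, hCD.mem_right⟩
  exact hCD.ne (h.nodup hop)
    ((h.eq_of_mem_of_mem hC hB hxC hxB).trans (h.eq_of_mem_of_mem hB hD hyB hyD))

theorem adjacent_iff_adjBlock (h : IsOPAssembly σ) (hop : op ∈ σ) (hB : B ∈ op)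
    (hC : C ∈ σ.flatten) (hx : x ∈ B) (hy : y ∈ C) :
    op.Adjacent B C ↔ adjBlock σ x y := by
  refine ⟨fun hBC => adjBlock_iff.mpr ⟨op, hop, B, C, hBC, hx, hy⟩, fun ha => ?_⟩
  obtain ⟨op'', hop'', B', C', hBC', hxB', hyC'⟩ := adjBlock_iff.mp ha
  have hB' : B' ∈ σ.flatten := List.mem_flatten.mpr ⟨op'', hop'', hBC'.mem_left⟩
  have hC' : C' ∈ σ.flatten := List.mem_flatten.mpr ⟨op'', hop'', hBC'.mem_right⟩
  obtain rfl := h.eq_of_mem_of_mem hB' (List.mem_flatten.mpr ⟨op, hop, hB⟩) hxB' hx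
  obtain rfl := h.eq_of_mem_of_mem hC' hC hyC' hy
  rwa [h.part_eq_of_mem hop hop'' hB hBC'.mem_left]

end IsOPAssembly

section RelationsDetermineAssembly

variable {σ τ rest : Assembly} {op op' : OP} {B C : Finset ℕ} {x y : ℕ}

theorem eq_of_sameBlock_eq (hσ : IsOPAssembly σ) (hτ : IsOPAssembly τ)
    (hs : sameBlock σ = sameBlock τ) (hB : B ∈ σ.flatten) (hC : C ∈ τ.flatten)
    (hxB : x ∈ B) (hxC : x ∈ C) : B = C := by
  ext y
  rw [hσ.mem_iff_sameBlock hB hxB, hτ.mem_iff_sameBlock hC hxC, hs]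

theorem mem_flatten_of_sameBlock_eq (hσ : IsOPAssembly σ) (hτ : IsOPAssembly τ)
    (hs : sameBlock σ = sameBlock τ) (hB : B ∈ σ.flatten) : B ∈ τ.flatten := by
  obtain ⟨x, hx⟩ := hσ.nonempty hB
  have hxx : sameBlock τ x x := hs ▸ sameBlock_self_iff.mpr (mem_supp.mpr ⟨B, hB, hx⟩)
  obtain ⟨C, hC, hxC, -⟩ := sameBlock_iff.mp hxx
  rwa [eq_of_sameBlock_eq hσ hτ hs hB hC hx hxC]

theorem adjacent_of_rel_eq (hσ : IsOPAssembly σ) (hτ : IsOPAssembly τ)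
    (hs : sameBlock σ = sameBlock τ) (ha : adjBlock σ = adjBlock τ)
    (hop : op ∈ σ) (hop' : op' ∈ τ) (hB : B ∈ op) (hB' : B ∈ op')
    (hBC : op.Adjacent B C) :
    op'.Adjacent B C := by
  have hCσ : C ∈ σ.flatten := List.mem_flatten.mpr ⟨op, hop, hBC.mem_right⟩
  obtain ⟨x, hx⟩ := hσ.nonempty (List.mem_flatten.mpr ⟨op, hop, hB⟩)
  obtain ⟨y, hy⟩ := hσ.nonempty hCσ
  rw [hσ.adjacent_iff_adjBlock hop hB hCσ hx hy, ha] at hBC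
  exact (hτ.adjacent_iff_adjBlock hop' hB' (mem_flatten_of_sameBlock_eq hσ hτ hs hCσ) hx hy).mpr
    hBC

theorem sameAdjacency_of_rel_eq (hσ : IsOPAssembly σ) (hτ : IsOPAssembly τ)
    (hs : sameBlock σ = sameBlock τ) (ha : adjBlock σ = adjBlock τ)
    (hop : op ∈ σ) (hop' : op' ∈ τ) : op.SameAdjacency op' := fun _ hB hB' _ =>
  ⟨adjacent_of_rel_eq hσ hτ hs ha hop hop' hB hB',
    adjacent_of_rel_eq hτ hσ hs.symm ha.symm hop' hop hB' hB⟩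

theorem min_Uop_eq_min_supp
    (h : (op :: rest).Pairwise (fun o₁ o₂ => (Uop o₁).min < (Uop o₂).min)) :
    (Uop op).min = (supp (op :: rest)).min := by
  rw [supp_cons, Finset.min_union, left_eq_inf]
  refine Finset.le_min fun x hx => ?_
  obtain ⟨B, hB, hxB⟩ := mem_supp.mp hx
  obtain ⟨o, ho, hBo⟩ := List.mem_flatten.mp hB
  exact ((List.pairwise_cons.mp h).1 o ho).le.trans (Finset.min_le (mem_Uop.mpr ⟨B, hBo, hxB⟩))

theorem exists_mem_heads_of_sameBlock_eq {op' : OP} {rest' : Assembly}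
    (hσ : IsOPAssembly (op :: rest)) (hτ : IsOPAssembly (op' :: rest'))
    (hσs : (op :: rest).Pairwise (fun o₁ o₂ => (Uop o₁).min < (Uop o₂).min))
    (hτs : (op' :: rest').Pairwise (fun o₁ o₂ => (Uop o₁).min < (Uop o₂).min))
    (hs : sameBlock (op :: rest) = sameBlock (op' :: rest')) : ∃ B ∈ op, B ∈ op' := by
  obtain ⟨x, hxmin⟩ := Finset.min_of_nonempty (hσ.Uop_nonempty List.mem_cons_self)
  have hmin : (Uop op').min = (Uop op).min := by
    rw [min_Uop_eq_min_supp hτs, ← supp_eq_of_sameBlock_eq hs, ← min_Uop_eq_min_supp hσs]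
  obtain ⟨B, hB, hxB⟩ := mem_Uop.mp (Finset.mem_of_min hxmin)
  obtain ⟨C, hC, hxC⟩ := mem_Uop.mp (Finset.mem_of_min (hmin.trans hxmin))
  obtain rfl : B = C := eq_of_sameBlock_eq hσ hτ hs (List.mem_flatten.mpr ⟨op, by simp, hB⟩)
    (List.mem_flatten.mpr ⟨op', by simp, hC⟩) hxB hxC
  exact ⟨B, hB, hC⟩

theorem simRel_of_rel_eq (hσ : IsOPAssembly σ) (hτ : IsOPAssembly τ)
    (hσs : σ.Pairwise (fun o₁ o₂ => (Uop o₁).min < (Uop o₂).min))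
    (hτs : τ.Pairwise (fun o₁ o₂ => (Uop o₁).min < (Uop o₂).min))
    (hs : sameBlock σ = sameBlock τ) (ha : adjBlock σ = adjBlock τ) : SimRel σ τ := by
  induction σ generalizing τ with
  | nil =>
    cases τ with
    | nil => exact .nil
    | cons op' rest' =>
      exact absurd hτ.supp_nonempty (by rw [← supp_eq_of_sameBlock_eq hs]; simp [supp])
  | cons op rest ih =>
    cases τ with
    | nil => exact absurd hσ.supp_nonempty (by rw [supp_eq_of_sameBlock_eq hs]; simp [supp])
    | cons op' rest' =>
      obtain ⟨B, hB, hB'⟩ := exists_mem_heads_of_sameBlock_eq hσ hτ hσs hτs hs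
      have hsame := sameAdjacency_of_rel_eq hσ hτ hs ha List.mem_cons_self List.mem_cons_self
      have hor : op' = op ∨ op' = op.reverse :=
        hsame.eq_or_eq_reverse (hσ.nodup List.mem_cons_self) (hτ.nodup List.mem_cons_self) hB hB'
      have hU : Uop op' = Uop op := by
        rcases hor with rfl | rfl
        exacts [rfl, Uop_reverse]
      refine .cons hor (ih hσ.tail hτ.tail hσs.of_cons hτs.of_cons ?_ ?_)
      · ext x y
        rw [hσ.sameBlock_tail_iff, hτ.sameBlock_tail_iff, hs, hU]
      · ext x y
        rw [hσ.adjBlock_tail_iff, hτ.adjBlock_tail_iff, ha, hU]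

theorem SimRel.symm (h : SimRel σ τ) : SimRel τ σ :=
  List.Forall₂.flip (h.imp fun s t hst => by
    rcases hst with rfl | rfl
    exacts [Or.inl rfl, Or.inr (List.reverse_reverse s).symm])

theorem SimRel.exists_mem (h : SimRel σ τ) (hop : op ∈ σ) :
    ∃ op' ∈ τ, op' = op ∨ op' = op.reverse := by
  induction h with
  | nil => simp at hop
  | cons hst _ ih =>
    rcases List.mem_cons.mp hop with rfl | hop
    · exact ⟨_, List.mem_cons_self, hst⟩
    · obtain ⟨op', hop', h⟩ := ih hop
      exact ⟨op', List.mem_cons_of_mem _ hop', h⟩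

theorem SimRel.sameBlock_imp (h : SimRel σ τ) (hs : sameBlock σ x y) : sameBlock τ x y := by
  obtain ⟨op, hop, hin⟩ := hs
  obtain ⟨op', hop', rfl | rfl⟩ := h.exists_mem hop
  · exact ⟨_, hop', hin⟩
  · exact ⟨_, hop', sameBlockIn_reverse.mpr hin⟩

theorem SimRel.adjBlock_imp (h : SimRel σ τ) (ha : adjBlock σ x y) : adjBlock τ x y := by
  obtain ⟨op, hop, hin⟩ := adjBlock_iff.mp ha
  obtain ⟨op', hop', rfl | rfl⟩ := h.exists_mem hop
  · exact adjBlock_iff.mpr ⟨_, hop', hin⟩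
  · exact adjBlock_iff.mpr ⟨_, hop', adjBlockIn_reverse.mpr hin⟩

theorem SimRel.sameBlock_eq (h : SimRel σ τ) : sameBlock σ = sameBlock τ := by
  ext x y
  exact ⟨h.sameBlock_imp, h.symm.sameBlock_imp⟩

theorem SimRel.adjBlock_eq (h : SimRel σ τ) : adjBlock σ = adjBlock τ := by
  ext x y
  exact ⟨h.adjBlock_imp, h.symm.adjBlock_imp⟩

end RelationsDetermineAssembly

section BottMatrices

variable {n m : ℕ} {σ τ : Assembly} {x : ℕ}

theorem IsOPAssembly.not_adjBlock_self (h : IsOPAssembly σ) : ¬ adjBlock σ x x := fun ha =>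
  h.not_adjBlock_of_sameBlock (sameBlock_self_iff.mpr ha.mem_supp) ha

open Classical in
theorem FMat_apply_of_lt {j k : Fin m} (hkj : k < j) :
    FMat m σ j k = if sameBlock σ (j + 1) (k + 1) then -2
      else if adjBlock σ (j + 1) (k + 1) then 1 else 0 := by
  simp [FMat, hkj.ne', hkj]

theorem sameBlock_iff_FMat_eq {j k : Fin m} (hkj : k < j) :
    sameBlock σ (j + 1) (k + 1) ↔ FMat m σ j k = -2 := by
  rw [FMat_apply_of_lt hkj]
  split_ifs <;> simp_all

theorem adjBlock_iff_FMat_eq (hσ : IsOPAssembly σ) {j k : Fin m} (hkj : k < j) :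
    adjBlock σ (j + 1) (k + 1) ↔ FMat m σ j k = 1 := by
  rw [FMat_apply_of_lt hkj]
  split_ifs with hs
  · simpa using hσ.not_adjBlock_of_sameBlock hs
  all_goals simp_all

theorem eq_of_iff_below_diag {R S : ℕ → ℕ → Prop}
    (hR : ∀ x y, R x y → R y x) (hS : ∀ x y, S x y → S y x)
    (hRm : ∀ x y, R x y → x ∈ Finset.Icc 1 m) (hSm : ∀ x y, S x y → x ∈ Finset.Icc 1 m)
    (hdiag : ∀ x, R x x ↔ S x x)
    (h : ∀ j k : Fin m, k < j → (R (j + 1) (k + 1) ↔ S (j + 1) (k + 1))) : R = S := by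
  have below : ∀ x y, y < x → (R x y ↔ S x y) := by
    intro x y hyx
    by_cases hxy : x ∈ Finset.Icc 1 m ∧ y ∈ Finset.Icc 1 m
    · simp only [Finset.mem_Icc] at hxy
      have := h ⟨x - 1, by omega⟩ ⟨y - 1, by omega⟩ (Fin.mk_lt_mk.mpr (by omega))
      simpa [Nat.sub_add_cancel hxy.1.1, Nat.sub_add_cancel hxy.2.1] using this
    · exact iff_of_false (fun hr => hxy ⟨hRm _ _ hr, hRm _ _ (hR _ _ hr)⟩)
        (fun hs => hxy ⟨hSm _ _ hs, hSm _ _ (hS _ _ hs)⟩)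
  ext x y
  rcases lt_trichotomy x y with hxy | rfl | hxy
  · exact ⟨fun hr => hS _ _ ((below y x hxy).mp (hR _ _ hr)),
      fun hs => hR _ _ ((below y x hxy).mpr (hS _ _ hs))⟩
  · exact hdiag x
  · exact below x y hxy

theorem rel_eq_of_FMat_eq (hσ : IsAOP n m σ) (hτ : IsAOP n m τ) (h : FMat m σ = FMat m τ) :
    sameBlock σ = sameBlock τ ∧ adjBlock σ = adjBlock τ := by
  constructor
  · refine eq_of_iff_below_diag (fun _ _ => sameBlock.symm) (fun _ _ => sameBlock.symm)
      (fun _ _ hr => hσ.supp_eq ▸ hr.mem_supp) (fun _ _ hs => hτ.supp_eq ▸ hs.mem_supp)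
      (fun x => ?_) (fun j k hkj => ?_)
    · rw [sameBlock_self_iff, sameBlock_self_iff, hσ.supp_eq, hτ.supp_eq]
    · rw [sameBlock_iff_FMat_eq hkj, sameBlock_iff_FMat_eq hkj, h]
  · refine eq_of_iff_below_diag (fun _ _ => adjBlock.symm) (fun _ _ => adjBlock.symm)
      (fun _ _ hr => hσ.supp_eq ▸ hr.mem_supp) (fun _ _ hs => hτ.supp_eq ▸ hs.mem_supp)
      (fun x => iff_of_false hσ.isOPAssembly.not_adjBlock_self hτ.isOPAssembly.not_adjBlock_self)
      (fun j k hkj => ?_)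
    rw [adjBlock_iff_FMat_eq hσ.isOPAssembly hkj, adjBlock_iff_FMat_eq hτ.isOPAssembly hkj, h]

theorem FMat_eq_of_simRel (h : SimRel σ τ) : FMat m σ = FMat m τ := by
  unfold FMat
  rw [h.sameBlock_eq, h.adjBlock_eq]

theorem FMat_eq_iff_simRel (hσ : IsAOP n m σ) (hτ : IsAOP n m τ) :
    FMat m σ = FMat m τ ↔ SimRel σ τ := by
  refine ⟨fun h => ?_, FMat_eq_of_simRel⟩
  obtain ⟨hs, ha⟩ := rel_eq_of_FMat_eq hσ hτ h
  exact simRel_of_rel_eq hσ.isOPAssembly hτ.isOPAssembly hσ.pairwise_min_lt hτ.pairwise_min_lt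
    hs ha

theorem FMat_eq_bottMatrix {i : Fin m → ℤ}
    (hs : ∀ j k : Fin m, sameBlock σ (j + 1) (k + 1) ↔ i j = i k)
    (ha : ∀ j k : Fin m, adjBlock σ (j + 1) (k + 1) ↔ |i j - i k| = 1) :
    FMat m σ = bottMatrix m i := by
  ext j k
  simp only [FMat, bottMatrix, hs, ha]

end BottMatrices

section Slots

variable {P : List (Finset ℕ)} {σ rest : Assembly} {op : OP} {B : Finset ℕ} {x y t u : ℕ}

theorem eq_of_mem_getElem (hP : P.Pairwise Disjoint) (ht : t < P.length) (hu : u < P.length)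
    (hxt : x ∈ P[t]) (hxu : x ∈ P[u]) : t = u := by
  by_contra hne
  rcases Nat.lt_or_gt_of_ne hne with h | h
  · exact Finset.disjoint_left.mp (List.pairwise_iff_getElem.mp hP t u ht hu h) hxt hxu
  · exact Finset.disjoint_left.mp (List.pairwise_iff_getElem.mp hP u t hu ht h) hxu hxt

theorem sameBlockIn_iff (hP : P.Pairwise Disjoint) (ht : t < P.length) (hu : u < P.length)
    (hx : x ∈ P[t]) (hy : y ∈ P[u]) : sameBlockIn P x y ↔ t = u := by
  refine ⟨fun ⟨b, hb, hxb, hyb⟩ => ?_, fun htu => by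
    subst htu
    exact ⟨P[t], List.getElem_mem ht, hx, hy⟩⟩
  obtain ⟨s, hs, rfl⟩ := List.mem_iff_getElem.mp hb
  exact (eq_of_mem_getElem hP ht hs hx hxb).trans (eq_of_mem_getElem hP hs hu hyb hy)

theorem adjBlockIn_iff (hP : P.Pairwise Disjoint) (ht : t < P.length) (hu : u < P.length)
    (hx : x ∈ P[t]) (hy : y ∈ P[u]) : adjBlockIn P x y ↔ t + 1 = u ∨ u + 1 = t := by
  constructor
  · rintro ⟨B, C, hBC, hxB, hyC⟩
    obtain ⟨s, hs, ⟨rfl, rfl⟩ | ⟨rfl, rfl⟩⟩ := List.adjacent_iff_getElem.mp hBC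
    · have := eq_of_mem_getElem hP ht (by omega) hx hxB
      have := eq_of_mem_getElem hP hu hs hy hyC
      omega
    · have := eq_of_mem_getElem hP ht hs hx hxB
      have := eq_of_mem_getElem hP hu (by omega) hy hyC
      omega
  · rintro (rfl | rfl)
    · exact ⟨_, _, List.adjacent_iff_getElem.mpr ⟨t, hu, Or.inl ⟨rfl, rfl⟩⟩, hx, hy⟩
    · exact ⟨_, _, List.adjacent_iff_getElem.mpr ⟨u, ht, Or.inr ⟨rfl, rfl⟩⟩, hx, hy⟩

def pad (σ : Assembly) : List (Finset ℕ) := σ.flatMap (∅ :: ·)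

theorem pad_cons : pad (op :: rest) = ∅ :: (op ++ pad rest) := by simp [pad]

theorem length_pad : (pad σ).length = (σ.map List.length).sum + σ.length := by
  induction σ with
  | nil => rfl
  | cons op rest ih => simp [pad_cons, ih]; omega

theorem eq_empty_of_head?_pad (h : (pad σ).head? = some B) : B = ∅ := by
  cases σ <;> simp_all [pad]

theorem pairwise_disjoint_pad (h : σ.flatten.Pairwise Disjoint) : (pad σ).Pairwise Disjoint := by
  rw [List.pairwise_flatten] at h
  rw [pad, List.pairwise_flatMap]
  exact ⟨fun op hop => by simpa using h.1 op hop,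
    h.2.imp fun hop => by simpa [or_imp, forall_and] using hop⟩

theorem sameBlock_iff_pad : sameBlock σ x y ↔ sameBlockIn (pad σ) x y := by
  rw [sameBlock_iff]
  simp only [sameBlockIn, pad, List.mem_flatten, List.mem_flatMap, List.mem_cons]
  constructor
  · rintro ⟨b, ⟨op, hop, hb⟩, hxy⟩
    exact ⟨b, ⟨op, hop, Or.inr hb⟩, hxy⟩
  · rintro ⟨b, ⟨op, hop, rfl | hb⟩, hxy⟩
    · simp at hxy
    · exact ⟨b, ⟨op, hop, hb⟩, hxy⟩

theorem adjBlock_iff_pad : adjBlock σ x y ↔ adjBlockIn (pad σ) x y := by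
  induction σ with
  | nil => simp [adjBlock, adjBlockIn, pad, List.Adjacent]
  | cons op rest ih =>
    rw [adjBlock_cons, ih, pad_cons]
    constructor
    · rintro (⟨B, C, hBC, hx, hy⟩ | ⟨B, C, hBC, hx, hy⟩)
      · exact ⟨B, C, hBC.mono (List.infix_append_left.trans (List.suffix_cons _ _).isInfix),
          hx, hy⟩
      · exact ⟨B, C, hBC.mono ((List.suffix_append _ _).trans (List.suffix_cons _ _)).isInfix,
          hx, hy⟩
    · rintro ⟨B, C, hBC, hx, hy⟩
      rcases List.adjacent_cons.mp hBC with ⟨rfl, -⟩ | ⟨rfl, -⟩ | hBC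
      · simp at hx
      · simp at hy
      rcases hBC.of_append with hBC | hBC | hB | hC
      · exact Or.inl ⟨B, C, hBC, hx, hy⟩
      · exact Or.inr ⟨B, C, hBC, hx, hy⟩
      · simp [eq_empty_of_head?_pad hB] at hx
      · simp [eq_empty_of_head?_pad hC] at hy

theorem exists_mem_getElem_pad (hx : x ∈ supp σ) :
    ∃ t, ∃ ht : t < (pad σ).length, 0 < t ∧ x ∈ (pad σ)[t] := by
  obtain ⟨B, hB, hxB⟩ := mem_supp.mp hx
  obtain ⟨op, hop, hBop⟩ := List.mem_flatten.mp hB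
  obtain ⟨t, ht, hPt⟩ := List.mem_iff_getElem.mp
    (List.mem_flatMap.mpr ⟨op, hop, List.mem_cons_of_mem ∅ hBop⟩ : B ∈ pad σ)
  refine ⟨t, ht, Nat.pos_of_ne_zero ?_, hPt ▸ hxB⟩
  rintro rfl
  cases σ with
  | nil => simp at hop
  | cons op' rest => simp [← hPt] at hxB

theorem FMat_mem_BSet {n m : ℕ} (hσ : IsAOP n m σ) : FMat m σ ∈ BSet n m := by
  have hP : (pad σ).Pairwise Disjoint := pairwise_disjoint_pad hσ.isOPAssembly.2
  have hmem : ∀ k : Fin m,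
      ∃ t, ∃ ht : t < (pad σ).length, 0 < t ∧ (k : ℕ) + 1 ∈ (pad σ)[t] :=
    fun k => exists_mem_getElem_pad (by simp [hσ.supp_eq])
  choose t ht ht0 hmem using hmem
  refine ⟨fun k => t k, fun k => ?_, FMat_eq_bottMatrix (fun j k => ?_) (fun j k => ?_)⟩
  · have hlen := ht k
    rw [length_pad] at hlen
    have : 0 < σ.length := List.length_pos_iff.mpr (by rintro rfl; simp at hlen)
    have := hσ.length_le
    have := ht0 k
    simp only [Finset.mem_Icc]
    omega
  · rw [sameBlock_iff_pad, sameBlockIn_iff hP (ht j) (ht k) (hmem j) (hmem k), Nat.cast_inj]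
  · rw [adjBlock_iff_pad, adjBlockIn_iff hP (ht j) (ht k) (hmem j) (hmem k),
      abs_eq zero_le_one]
    omega

end Slots

section Runs

variable {a b c : ℤ} {l g : List ℤ} {gs : List (List ℤ)}

theorem groupRuns_cons_cons (h : groupRuns (b :: l) = (b :: g) :: gs) :
    groupRuns (a :: b :: l) =
      if a + 1 = b then (a :: b :: g) :: gs else [a] :: (b :: g) :: gs := by
  rw [groupRuns, h]

theorem exists_groupRuns_cons (a : ℤ) (l : List ℤ) :
    ∃ g gs, groupRuns (a :: l) = (a :: g) :: gs := by
  induction l generalizing a with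
  | nil => exact ⟨[], [], rfl⟩
  | cons b l ih =>
    obtain ⟨g, gs, h⟩ := ih b
    rw [groupRuns_cons_cons h]
    split_ifs
    exacts [⟨_, _, rfl⟩, ⟨_, _, rfl⟩]

theorem flatten_groupRuns (l : List ℤ) : (groupRuns l).flatten = l := by
  induction l with
  | nil => rfl
  | cons a l ih =>
    rcases l with _ | ⟨b, l⟩
    · rfl
    obtain ⟨g, gs, h⟩ := exists_groupRuns_cons b l
    rw [h] at ih
    rw [groupRuns_cons_cons h]
    split_ifs <;> simp_all

theorem ne_nil_of_mem_groupRuns (hg : g ∈ groupRuns l) : g ≠ [] := by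
  induction l generalizing g with
  | nil => simp [groupRuns] at hg
  | cons a l ih =>
    rcases l with _ | ⟨b, l⟩
    · simp_all [groupRuns]
    obtain ⟨g', gs, h⟩ := exists_groupRuns_cons b l
    rw [h] at ih
    rw [groupRuns_cons_cons h] at hg
    split_ifs at hg <;> aesop

theorem exists_infix_groupRuns_iff :
    (∃ g ∈ groupRuns l, [a, b] <:+: g) ↔ [a, b] <:+: l ∧ a + 1 = b := by
  induction l with
  | nil => simp [groupRuns]
  | cons c l ih =>
    have hsingle : ¬ [a, b] <:+: [c] := fun h => absurd h.length_le (by simp)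
    rcases l with _ | ⟨d, l⟩
    · simp [groupRuns, hsingle]
    obtain ⟨g, gs, h⟩ := exists_groupRuns_cons d l
    rw [h] at ih
    simp only [List.mem_cons, exists_eq_or_imp] at ih
    have hcons : ∀ l',
        [a, b] <:+: c :: d :: l' ↔ (a = c ∧ b = d) ∨ [a, b] <:+: d :: l' := by
      intro l'
      simp [List.infix_cons_iff (l₂ := d :: l')]
    rw [groupRuns_cons_cons h]
    split_ifs with hcd
    · simp only [List.mem_cons, exists_eq_or_imp]
      rw [hcons, hcons, or_assoc, ih]
      constructor
      · rintro (⟨rfl, rfl⟩ | h)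
        exacts [⟨Or.inl ⟨rfl, rfl⟩, hcd⟩, ⟨Or.inr h.1, h.2⟩]
      · rintro ⟨⟨rfl, rfl⟩ | h, hab⟩
        exacts [Or.inl ⟨rfl, rfl⟩, Or.inr ⟨h, hab⟩]
    · simp only [List.mem_cons, exists_eq_or_imp, hsingle, false_or]
      rw [ih, hcons]
      constructor
      · rintro ⟨h, hab⟩
        exact ⟨Or.inr h, hab⟩
      · rintro ⟨⟨rfl, rfl⟩ | h, hab⟩
        exacts [absurd hab hcd, ⟨h, hab⟩]

theorem infix_succ_iff (hl : l.Pairwise (· < ·)) :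
    [a, a + 1] <:+: l ↔ a ∈ l ∧ a + 1 ∈ l := by
  refine ⟨fun h => ⟨h.subset (by simp), h.subset (by simp)⟩, ?_⟩
  induction l with
  | nil => simp
  | cons c l ih =>
    rintro ⟨ha, ha1⟩
    have hlt := (List.pairwise_cons.mp hl).1
    rcases List.mem_cons.mp ha with rfl | ha
    · have ha1 : a + 1 ∈ l := (List.mem_cons.mp ha1).resolve_left (by omega)
      obtain ⟨d, l', rfl⟩ := List.exists_cons_of_ne_nil (List.ne_nil_of_mem ha1)
      have hd : d = a + 1 := by
        rcases List.mem_cons.mp ha1 with h | h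
        · exact h.symm
        · have := (List.pairwise_cons.mp (List.pairwise_cons.mp hl).2).1 _ h
          have := hlt d List.mem_cons_self
          omega
      subst hd
      exact (List.prefix_append [a, a + 1] l').isInfix
    · have ha1 : a + 1 ∈ l := (List.mem_cons.mp ha1).resolve_left (by have := hlt a ha; omega)
      exact (ih (List.pairwise_cons.mp hl).2 ⟨ha, ha1⟩).trans (List.suffix_cons c l).isInfix

theorem length_add_length_groupRuns_le {n : ℤ} (hl : (a :: l).Pairwise (· < ·))
    (hn : ∀ v ∈ a :: l, v ≤ n) :
    ((a :: l).length : ℤ) + (groupRuns (a :: l)).length + a ≤ n + 2 := by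
  induction l generalizing a with
  | nil =>
    have := hn a List.mem_cons_self
    simp [groupRuns]
    omega
  | cons b l ih =>
    obtain ⟨g, gs, h⟩ := exists_groupRuns_cons b l
    have hab : a < b := (List.pairwise_cons.mp hl).1 b (by simp)
    have := ih (List.pairwise_cons.mp hl).2 (fun v hv => hn v (List.mem_cons_of_mem a hv))
    rw [h] at this
    rw [groupRuns_cons_cons h]
    split_ifs <;> simp_all <;> omega

end Runs

section Realization

variable {n m : ℕ} {i : Fin m → ℤ} {v w : ℤ} {x : ℕ} {σ τ : Assembly}

def sortedValues (m : ℕ) (i : Fin m → ℤ) : List ℤ :=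
  (Finset.image i Finset.univ).sort (· ≤ ·)

theorem alpha_eq : alpha m i = (groupRuns (sortedValues m i)).map (List.map (fiberSet m i)) := rfl

theorem mem_sortedValues : v ∈ sortedValues m i ↔ ∃ k, i k = v := by simp [sortedValues]

theorem sortedValues_pairwise_lt : (sortedValues m i).Pairwise (· < ·) :=
  (Finset.sortedLT_sort _).pairwise

theorem mem_fiberSet : x ∈ fiberSet m i v ↔ ∃ k : Fin m, i k = v ∧ (k : ℕ) + 1 = x := by
  simp [fiberSet]

theorem succ_mem_fiberSet {j : Fin m} : (j : ℕ) + 1 ∈ fiberSet m i v ↔ i j = v := by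
  rw [mem_fiberSet]
  refine ⟨fun ⟨k, hk, hkj⟩ => ?_, fun h => ⟨j, h, rfl⟩⟩
  rwa [← Fin.ext (Nat.succ_injective hkj)]

theorem disjoint_fiberSet (hvw : v ≠ w) : Disjoint (fiberSet m i v) (fiberSet m i w) := by
  refine Finset.disjoint_left.mpr fun x hv hw => ?_
  obtain ⟨k, rfl, rfl⟩ := mem_fiberSet.mp hv
  exact hvw (succ_mem_fiberSet.mp hw)

theorem flatten_alpha : (alpha m i).flatten = (sortedValues m i).map (fiberSet m i) := by
  rw [alpha_eq, ← List.map_flatten, flatten_groupRuns]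

theorem isOPAssembly_alpha : IsOPAssembly (alpha m i) := by
  refine ⟨fun op hop => ?_, ?_⟩
  · obtain ⟨g, hg, rfl⟩ := List.mem_map.mp hop
    refine ⟨by simpa using ne_nil_of_mem_groupRuns hg, fun b hb => ?_⟩
    obtain ⟨v, hv, rfl⟩ := List.mem_map.mp hb
    have hv : v ∈ sortedValues m i := by
      rw [← flatten_groupRuns (sortedValues m i)]
      exact List.mem_flatten.mpr ⟨g, hg, hv⟩
    obtain ⟨k, rfl⟩ := mem_sortedValues.mp hv
    exact ⟨k + 1, succ_mem_fiberSet.mpr rfl⟩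
  · rw [flatten_alpha, List.pairwise_map]
    exact sortedValues_pairwise_lt.imp fun hvw => disjoint_fiberSet hvw.ne

theorem supp_alpha : supp (alpha m i) = Finset.Icc 1 m := by
  ext x
  rw [mem_supp, flatten_alpha, Finset.mem_Icc]
  constructor
  · rintro ⟨b, hb, hx⟩
    obtain ⟨v, -, rfl⟩ := List.mem_map.mp hb
    obtain ⟨k, -, rfl⟩ := mem_fiberSet.mp hx
    omega
  · intro hx
    have hk : ((⟨x - 1, by omega⟩ : Fin m) : ℕ) + 1 = x := by simp only; omega
    exact ⟨_, List.mem_map.mpr ⟨_, mem_sortedValues.mpr ⟨_, rfl⟩, rfl⟩,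
      hk ▸ succ_mem_fiberSet.mpr rfl⟩

theorem sameBlock_alpha {j k : Fin m} :
    sameBlock (alpha m i) (j + 1) (k + 1) ↔ i j = i k := by
  rw [sameBlock_iff, flatten_alpha]
  constructor
  · rintro ⟨b, hb, hj, hk⟩
    obtain ⟨v, -, rfl⟩ := List.mem_map.mp hb
    rw [succ_mem_fiberSet.mp hj, succ_mem_fiberSet.mp hk]
  · intro h
    exact ⟨_, List.mem_map.mpr ⟨_, mem_sortedValues.mpr ⟨j, rfl⟩, rfl⟩,
      succ_mem_fiberSet.mpr rfl, succ_mem_fiberSet.mpr h.symm⟩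

theorem adjBlock_alpha {j k : Fin m} :
    adjBlock (alpha m i) (j + 1) (k + 1) ↔ |i j - i k| = 1 := by
  have hruns : ∀ v w, v ∈ sortedValues m i → w ∈ sortedValues m i →
      ((∃ g ∈ groupRuns (sortedValues m i), [v, w] <:+: g) ↔ v + 1 = w) := by
    intro v w hv hw
    rw [exists_infix_groupRuns_iff]
    refine ⟨And.right, ?_⟩
    rintro rfl
    exact ⟨(infix_succ_iff sortedValues_pairwise_lt).mpr ⟨hv, hw⟩, rfl⟩
  have hj : i j ∈ sortedValues m i := mem_sortedValues.mpr ⟨j, rfl⟩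
  have hk : i k ∈ sortedValues m i := mem_sortedValues.mpr ⟨k, rfl⟩
  have hadj : adjBlock (alpha m i) (j + 1) (k + 1) ↔
      ∃ g ∈ groupRuns (sortedValues m i), g.Adjacent (i j) (i k) := by
    rw [adjBlock_iff, alpha_eq]
    constructor
    · rintro ⟨op, hop, B, C, hBC, hjB, hkC⟩
      obtain ⟨g, hg, rfl⟩ := List.mem_map.mp hop
      obtain ⟨v, w, hvw, rfl, rfl⟩ := List.adjacent_map.mp hBC
      rw [succ_mem_fiberSet] at hjB hkC
      exact ⟨g, hg, hjB ▸ hkC ▸ hvw⟩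
    · rintro ⟨g, hg, hjk⟩
      exact ⟨_, List.mem_map.mpr ⟨g, hg, rfl⟩, _, _,
        List.adjacent_map.mpr ⟨_, _, hjk, rfl, rfl⟩,
        succ_mem_fiberSet.mpr rfl, succ_mem_fiberSet.mpr rfl⟩
  rw [hadj, abs_eq zero_le_one]
  simp only [List.Adjacent, and_or_left, exists_or]
  rw [hruns _ _ hj hk, hruns _ _ hk hj]
  omega

theorem length_alpha_le (hi : ∀ t, i t ∈ Finset.Icc (1 : ℤ) n) :
    ((alpha m i).map List.length).sum + ((alpha m i).length - 1) ≤ n := by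
  have hsum : ((alpha m i).map List.length).sum = (sortedValues m i).length := by
    rw [← List.length_flatten, flatten_alpha, List.length_map]
  have hlen : (alpha m i).length = (groupRuns (sortedValues m i)).length := by simp [alpha_eq]
  have hbounds : ∀ v ∈ sortedValues m i, 1 ≤ v ∧ v ≤ n := fun v hv => by
    obtain ⟨k, rfl⟩ := mem_sortedValues.mp hv
    simpa using hi k
  have hsorted := sortedValues_pairwise_lt (i := i)
  rw [hsum, hlen]
  rcases h : sortedValues m i with _ | ⟨a, l⟩
  · simp [groupRuns]
  · rw [h] at hbounds hsorted
    have := length_add_length_groupRuns_le hsorted (fun v hv => (hbounds v hv).2)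
    have := (hbounds a List.mem_cons_self).1
    have : 0 < (groupRuns (a :: l)).length := by
      obtain ⟨g, gs, hg⟩ := exists_groupRuns_cons a l
      simp [hg]
    omega

theorem IsOPAssembly.of_perm (h : σ.Perm τ) (hτ : IsOPAssembly τ) : IsOPAssembly σ :=
  ⟨fun op hop => hτ.1 op (h.subset hop),
    (h.flatten.pairwise_iff fun hd => Disjoint.symm hd).mpr hτ.2⟩

theorem supp_eq_of_perm (h : σ.Perm τ) : supp σ = supp τ := by
  ext x
  simp [mem_supp, h.flatten.mem_iff]

theorem sameBlock_eq_of_perm (h : σ.Perm τ) : sameBlock σ = sameBlock τ := by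
  ext x y
  simp [sameBlock, h.mem_iff]

theorem adjBlock_eq_of_perm (h : σ.Perm τ) : adjBlock σ = adjBlock τ := by
  ext x y
  simp [adjBlock, h.mem_iff]

theorem IsOPAssembly.pairwise_min_ne (h : IsOPAssembly σ) :
    σ.Pairwise (fun o₁ o₂ => (Uop o₁).min ≠ (Uop o₂).min) := by
  refine (List.pairwise_flatten.mp h.2).2.imp_of_mem fun ho₁ _ hdisj hmin => ?_
  obtain ⟨x, hx⟩ := Finset.min_of_nonempty (h.Uop_nonempty ho₁)
  obtain ⟨B, hB, hxB⟩ := mem_Uop.mp (Finset.mem_of_min hx)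
  obtain ⟨C, hC, hxC⟩ := mem_Uop.mp (Finset.mem_of_min (hmin ▸ hx))
  exact Finset.disjoint_left.mp (hdisj B hB C hC) hxB hxC

def sortByMin (σ : Assembly) : Assembly :=
  σ.mergeSort fun o₁ o₂ => (Uop o₁).min ≤ (Uop o₂).min

theorem sortByMin_perm (σ : Assembly) : (sortByMin σ).Perm σ := List.mergeSort_perm σ _

theorem pairwise_sortByMin (hσ : IsOPAssembly σ) :
    (sortByMin σ).Pairwise (fun o₁ o₂ => (Uop o₁).min < (Uop o₂).min) := by
  have hle := List.pairwise_mergeSort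
    (le := fun o₁ o₂ : OP => (Uop o₁).min ≤ (Uop o₂).min)
    (fun _ _ _ h₁ h₂ => by simpa using (of_decide_eq_true h₁).trans (of_decide_eq_true h₂))
    (fun o₁ o₂ => by simpa using le_total (Uop o₁).min (Uop o₂).min) σ
  refine (hle.and (hσ.of_perm (sortByMin_perm σ)).pairwise_min_ne).imp
    fun ⟨hmin_le, hmin_ne⟩ => ?_
  exact lt_of_le_of_ne (by simpa using hmin_le) hmin_ne

theorem exists_isAOP_FMat_eq_bottMatrix (hi : ∀ t, i t ∈ Finset.Icc (1 : ℤ) n) :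
    ∃ σ, IsAOP n m σ ∧ FMat m σ = bottMatrix m i := by
  have hperm := sortByMin_perm (alpha m i)
  have hσ := isOPAssembly_alpha.of_perm hperm
  refine ⟨sortByMin (alpha m i),
    ⟨hσ.1, hσ.2, (supp_eq_of_perm hperm).trans supp_alpha,
      pairwise_sortByMin isOPAssembly_alpha, ?_⟩,
    FMat_eq_bottMatrix (fun j k => ?_) (fun j k => ?_)⟩
  · rw [(hperm.map List.length).sum_eq, hperm.length_eq]
    exact length_alpha_le hi
  · rw [sameBlock_eq_of_perm hperm, sameBlock_alpha]
  · rw [adjBlock_eq_of_perm hperm, adjBlock_alpha]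

end Realization

/-- for `σ, τ ∈ AOP(n,m)`, `F(σ) = F(τ)` iff `σ ∼ τ`; consequently
there is a bijection between `B(n,m)` and `AOP(n,m)/∼`. -/
theorem F_eq_iff_sim (n m : ℕ) :
    (∀ σ τ : Assembly, IsAOP n m σ → IsAOP n m τ →
      (FMat m σ = FMat m τ ↔ SimRel σ τ)) ∧
    Nonempty ((BSet n m) ≃
      Quot (fun σ τ : {σ : Assembly // IsAOP n m σ} => SimRel σ.1 τ.1)) := by
  refine ⟨fun σ τ hσ hτ => FMat_eq_iff_simRel hσ hτ, ?_⟩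
  let F : Quot (fun σ τ : {σ : Assembly // IsAOP n m σ} => SimRel σ.1 τ.1) → BSet n m :=
    Quot.lift (fun σ => ⟨FMat m σ.1, FMat_mem_BSet σ.2⟩)
      (fun _ _ h => Subtype.ext (FMat_eq_of_simRel h))
  have hinj : Function.Injective F := by
    rintro ⟨σ⟩ ⟨τ⟩ h
    exact Quot.sound ((FMat_eq_iff_simRel σ.2 τ.2).mp (congrArg Subtype.val h))
  have hsurj : Function.Surjective F := by
    rintro ⟨_, i, hi, rfl⟩
    obtain ⟨σ, hσ, hF⟩ := exists_isAOP_FMat_eq_bottMatrix hi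
    exact ⟨Quot.mk _ ⟨σ, hσ⟩, Subtype.ext hF⟩
  exact ⟨(Equiv.ofBijective F ⟨hinj, hsurj⟩).symm⟩
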